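/- arXiv:2303.12473 — 9 statements merged into one kernel-verified Lean document; each statement's English description precedes it below -/
import Mathlib

section
/- Let A be a real n×n matrix whose symmetric part H(A) = (A + Aᵀ)/2 is positive definite, with largest and smallest eigenvalues λ_max and λ_min. Set η* = (λ_max + λ_min)/2. Then ‖(η* I + S(A))⁻¹‖₂ · ‖H(A) − η* I‖₂ < 1, where S(A) = (A − Aᵀ)/2 is the skew-symmetric part of A and ‖·‖₂ denotes the spectral (operator 2-) norm. In particular, η* I + S(A) is invertible. -/
/-!
Since `S` is skew-symmetric, `⟪x, (η I + S) x⟫ = η ‖x‖²`, so `‖(η I + S) x‖ ≥ η ‖x‖`: the matrix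
`η I + S` is invertible with `‖(η I + S)⁻¹‖₂ ≤ 1 / η`. Diagonalising `H` by a unitary matrix shows
that `‖H - η I‖₂` is the largest `|λᵢ - η|`, which for the midpoint `η` of `[λ_min, λ_max]` is
`(λ_max - λ_min) / 2`. The product is therefore at most `(λ_max - λ_min) / (λ_max + λ_min)`,
which is `< 1` because `λ_min > 0`.
-/

open Matrix

/-- Spectral (operator 2-) norm of a real matrix. -/
noncomputable def spec {m n : ℕ} (M : Matrix (Fin m) (Fin n) ℝ) : ℝ :=
  ‖LinearMap.toContinuousLinearMap (Matrix.toEuclideanLin M)‖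

open RealInnerProductSpace
open scoped Matrix.Norms.L2Operator

theorem spec_eq_l2_opNorm {m n : ℕ} (M : Matrix (Fin m) (Fin n) ℝ) : spec M = ‖M‖ := rfl

theorem mul_norm_le_norm_apply_of_mul_norm_sq_le_inner {E : Type*} [NormedAddCommGroup E]
    [InnerProductSpace ℝ E] {T : E → E} {η : ℝ} {x : E} (h : η * ‖x‖ ^ 2 ≤ ⟪x, T x⟫) :
    η * ‖x‖ ≤ ‖T x‖ := by
  rcases eq_or_ne x 0 with rfl | hx
  · simp
  have hx' : 0 < ‖x‖ := norm_pos_iff.mpr hx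
  refine le_of_mul_le_mul_left ?_ hx'
  calc ‖x‖ * (η * ‖x‖) = η * ‖x‖ ^ 2 := by ring
    _ ≤ ⟪x, T x⟫ := h
    _ ≤ ‖x‖ * ‖T x‖ := real_inner_le_norm x (T x)

theorem abs_sub_midpoint_le_of_finite {ι : Type*} [Finite ι] (f : ι → ℝ) (i : ι) :
    |f i - ((⨆ j, f j) + ⨅ j, f j) / 2| ≤ ((⨆ j, f j) - ⨅ j, f j) / 2 := by
  have hsup : f i ≤ ⨆ j, f j := le_ciSup (Set.finite_range f).bddAbove i
  have hinf : ⨅ j, f j ≤ f i := ciInf_le (Set.finite_range f).bddBelow i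
  rw [abs_le]
  constructor <;> linarith

theorem ciInf_pos_of_finite {ι : Type*} [Finite ι] [Nonempty ι] {f : ι → ℝ} (hf : ∀ i, 0 < f i) :
    0 < ⨅ i, f i := by
  obtain ⟨i, hi⟩ := exists_eq_ciInf_of_finite (f := f)
  exact hi ▸ hf i

namespace Matrix

theorem dotProduct_mulVec_self_eq_zero_of_transpose_eq_neg {R n : Type*} [CommRing R]
    [NoZeroDivisors R] [CharZero R] [Fintype n] {S : Matrix n n R} (hS : Sᵀ = -S) (x : n → R) :
    x ⬝ᵥ S *ᵥ x = 0 := by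
  refine self_eq_neg.mp ?_
  conv_lhs => rw [dotProduct_mulVec, ← mulVec_transpose, hS, neg_mulVec, neg_dotProduct,
    dotProduct_comm]

variable {𝕜 n : Type*} [RCLike 𝕜] [Fintype n] [DecidableEq n]

theorem IsHermitian.l2_opNorm_sub_smul_one {A : Matrix n n 𝕜} (hA : A.IsHermitian) (η : ℝ) :
    ‖A - η • (1 : Matrix n n 𝕜)‖ = ‖fun i => hA.eigenvalues i - η‖ := by
  have hshift : A - η • (1 : Matrix n n 𝕜) =
      hA.eigenvectorUnitary * diagonal (fun i => ((hA.eigenvalues i - η : ℝ) : 𝕜)) *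
        (star hA.eigenvectorUnitary : Matrix n n 𝕜) := by
    have hdiag : diagonal (fun i => ((hA.eigenvalues i - η : ℝ) : 𝕜)) =
        diagonal (RCLike.ofReal ∘ hA.eigenvalues) - η • (1 : Matrix n n 𝕜) := by
      ext i j
      by_cases hij : i = j <;> simp [hij, RCLike.real_smul_eq_coe_mul]
    conv_lhs => rw [hA.spectral_theorem]
    rw [hdiag, Unitary.conjStarAlgAut_apply, mul_sub, sub_mul, mul_smul_comm, mul_one,
      smul_mul_assoc, Unitary.mul_star_self_of_mem hA.eigenvectorUnitary.2]
  rw [hshift, ← Unitary.coe_star, CStarRing.norm_mul_coe_unitary, CStarRing.norm_coe_unitary_mul,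
    l2_opNorm_diagonal]
  simp only [Pi.norm_def]
  congr! 3 with i
  exact Subtype.ext (RCLike.norm_ofReal _)

theorem isUnit_of_mul_norm_le_norm_toEuclideanCLM {M : Matrix n n 𝕜} {η : ℝ} (hη : 0 < η)
    (h : ∀ x, η * ‖x‖ ≤ ‖toEuclideanCLM (𝕜 := 𝕜) M x‖) : IsUnit M := by
  refine mulVec_injective_iff_isUnit.mp fun v w hvw => ?_
  have hker := h (WithLp.toLp 2 (v - w))
  rw [toEuclideanCLM_toLp, mulVec_sub, hvw, sub_self, WithLp.toLp_zero, norm_zero] at hker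
  have h0 : ‖WithLp.toLp 2 (v - w)‖ ≤ 0 := nonpos_of_mul_nonpos_right hker hη
  simpa [sub_eq_zero] using h0

theorem l2_opNorm_nonsing_inv_le_of_mul_norm_le {M : Matrix n n 𝕜} {η : ℝ} (hη : 0 < η)
    (h : ∀ x, η * ‖x‖ ≤ ‖toEuclideanCLM (𝕜 := 𝕜) M x‖) : ‖M⁻¹‖ ≤ η⁻¹ := by
  have hM := isUnit_of_mul_norm_le_norm_toEuclideanCLM hη h
  refine (toEuclideanCLM (𝕜 := 𝕜) M⁻¹).opNorm_le_bound (by positivity) fun y => ?_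
  have hy := h (toEuclideanCLM (𝕜 := 𝕜) M⁻¹ y)
  rw [← mul_apply_eq_comp, ← map_mul, mul_nonsing_inv _ ((isUnit_iff_isUnit_det M).mp hM),
    map_one, one_apply_eq_self] at hy
  rw [le_inv_mul_iff₀ hη]
  exact hy

theorem inner_toEuclideanCLM_smul_one_add_of_transpose_eq_neg {S : Matrix n n ℝ} (hS : Sᵀ = -S)
    (η : ℝ) (x : EuclideanSpace ℝ n) :
    ⟪x, toEuclideanCLM (𝕜 := ℝ) (η • 1 + S) x⟫ = η * ‖x‖ ^ 2 := by
  rw [map_add, map_smul, map_one, _root_.add_apply, _root_.smul_apply,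
    one_apply_eq_self, inner_add_right, real_inner_smul_right, real_inner_self_eq_norm_sq,
    inner_toEuclideanCLM, dotProduct_mulVec_self_eq_zero_of_transpose_eq_neg hS, add_zero]

end Matrix

theorem stmt0_general {n : ℕ} (A H S : Matrix (Fin n) (Fin n) ℝ)
    (hSdef : S = (1 / 2 : ℝ) • (A - Aᵀ))
    (hH : H.IsHermitian) (hpd : H.PosDef)
    (lmax lmin η : ℝ)
    (hlmax : lmax = ⨆ i, hH.eigenvalues i)
    (hlmin : lmin = ⨅ i, hH.eigenvalues i)
    (hη : η = (lmax + lmin) / 2) :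
    IsUnit (η • (1 : Matrix (Fin n) (Fin n) ℝ) + S) ∧
      spec ((η • (1 : Matrix (Fin n) (Fin n) ℝ) + S)⁻¹) *
        spec (H - η • (1 : Matrix (Fin n) (Fin n) ℝ)) < 1 := by
  obtain hn | hn := isEmpty_or_nonempty (Fin n)
  · refine ⟨isUnit_of_subsingleton _, ?_⟩
    simp [spec_eq_l2_opNorm, Subsingleton.elim _ (0 : Matrix (Fin n) (Fin n) ℝ)]
  have hdev : ∀ i, |hH.eigenvalues i - η| ≤ (lmax - lmin) / 2 := fun i => by
    rw [hη, hlmax, hlmin]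
    exact abs_sub_midpoint_le_of_finite _ i
  have hlmin_pos : 0 < lmin := hlmin ▸ ciInf_pos_of_finite hpd.eigenvalues_pos
  have hspread : 0 ≤ (lmax - lmin) / 2 := (abs_nonneg _).trans (hdev (Classical.arbitrary _))
  have hη_pos : 0 < η := by rw [hη]; linarith
  have hS : Sᵀ = -S := by
    rw [hSdef, transpose_smul, transpose_sub, transpose_transpose, ← neg_sub, smul_neg]
  have hcoercive : ∀ x, η * ‖x‖ ≤ ‖toEuclideanCLM (𝕜 := ℝ) (η • 1 + S) x‖ := fun x =>
    mul_norm_le_norm_apply_of_mul_norm_sq_le_inner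
      (inner_toEuclideanCLM_smul_one_add_of_transpose_eq_neg hS η x).ge
  have hinv : spec (η • 1 + S)⁻¹ ≤ η⁻¹ := l2_opNorm_nonsing_inv_le_of_mul_norm_le hη_pos hcoercive
  have hshift : spec (H - η • 1) ≤ (lmax - lmin) / 2 := by
    rw [spec_eq_l2_opNorm, hH.l2_opNorm_sub_smul_one, pi_norm_le_iff_of_nonneg hspread]
    exact hdev
  refine ⟨isUnit_of_mul_norm_le_norm_toEuclideanCLM hη_pos hcoercive, ?_⟩
  calc _ ≤ η⁻¹ * ((lmax - lmin) / 2) :=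
        mul_le_mul hinv hshift (norm_nonneg _) (inv_nonneg.mpr hη_pos.le)
    _ < 1 := by rw [inv_mul_lt_one₀ hη_pos]; linarith

/-- If the symmetric part `H` of a real `n × n` matrix `A` is positive definite, with largest
and smallest eigenvalues `λmax` and `λmin`, and `η* = (λmax + λmin)/2`, then
`‖(η* I + S(A))⁻¹‖₂ ⬝ ‖H(A) − η* I‖₂ < 1`; in particular `η* I + S(A)` is invertible. -/
theorem stmt0 {n : ℕ} (A H S : Matrix (Fin n) (Fin n) ℝ)
    (hHdef : H = (1 / 2 : ℝ) • (A + Aᵀ))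
    (hSdef : S = (1 / 2 : ℝ) • (A - Aᵀ))
    (hH : H.IsHermitian) (hpd : H.PosDef)
    (lmax lmin η : ℝ)
    (hlmax : lmax = ⨆ i, hH.eigenvalues i)
    (hlmin : lmin = ⨅ i, hH.eigenvalues i)
    (hη : η = (lmax + lmin) / 2) :
    IsUnit (η • (1 : Matrix (Fin n) (Fin n) ℝ) + S) ∧
      spec ((η • (1 : Matrix (Fin n) (Fin n) ℝ) + S)⁻¹) *
        spec (H - η • (1 : Matrix (Fin n) (Fin n) ℝ)) < 1 :=
  stmt0_general A H S hSdef hH hpd lmax lmin η hlmax hlmin hη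
end

section
/- Let A be an invertible real n×n matrix, b ∈ ℝⁿ, and M̃ an invertible real n×n matrix. Let x_k, x_{k−1} ∈ ℝⁿ with residuals r_k = b − A x_k and r_{k−1} = b − A x_{k−1}, and set δ₁ = M̃⁻¹ r_k and δ₂ = δ₁ − M̃⁻¹ r_{k−1}. If δ₁ and δ₂ are nonzero and linearly dependent, then there exists a scalar ν ∈ ℝ such that x* = (1 − ν) x_k + ν x_{k−1} satisfies A x* = b. -/
/-!
Write `u = M⁻¹ r_k` and `v = M⁻¹ r_{k-1}`, so that `δ₁ = u` and `δ₂ = u - v`. Since `δ₂ ≠ 0`,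
dependence gives `u = ν (u - v)`, i.e. `(1 - ν) u + ν v = 0`; as `M⁻¹` is injective the same
combination of the residuals vanishes. Residuals are affine in `x`, so `(1 - ν) r_k + ν r_{k-1}`
is the residual of `(1 - ν) x_k + ν x_{k-1}`.
-/

open Matrix

theorem exists_smul_add_smul_eq_zero_of_not_linearIndependent {K V : Type*} [DivisionRing K]
    [AddCommGroup V] [Module K V] {u v : V} (huv : u - v ≠ 0)
    (hdep : ¬ LinearIndependent K ![u, u - v]) :
    ∃ ν : K, (1 - ν) • u + ν • v = 0 := by
  simp only [linearIndependent_fin2, Matrix.cons_val_one, Matrix.cons_val_zero, not_and,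
    not_forall, not_not] at hdep
  obtain ⟨ν, hν⟩ := hdep huv
  refine ⟨ν, ?_⟩
  calc (1 - ν) • u + ν • v = u - ν • (u - v) := by rw [sub_smul, one_smul, smul_sub]; abel
    _ = 0 := by rw [hν, sub_self]

theorem sub_mulVec_affineCombination {m R : Type*} [Fintype m] [CommRing R]
    (A : Matrix m m R) (b x y : m → R) (ν : R) :
    b - A *ᵥ ((1 - ν) • x + ν • y) = (1 - ν) • (b - A *ᵥ x) + ν • (b - A *ᵥ y) := by
  rw [mulVec_add, mulVec_smul, mulVec_smul, smul_sub, smul_sub, sub_smul 1 ν b, one_smul]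
  abel

theorem stmt1_general {n : ℕ} (A M : Matrix (Fin n) (Fin n) ℝ)
    (hM : IsUnit M)
    (b xk xk1 rk rk1 δ1 δ2 : Fin n → ℝ)
    (hrk : rk = b - A.mulVec xk)
    (hrk1 : rk1 = b - A.mulVec xk1)
    (hδ1 : δ1 = M⁻¹.mulVec rk)
    (hδ2 : δ2 = δ1 - M⁻¹.mulVec rk1)
    (h2 : δ2 ≠ 0)
    (hdep : ¬ LinearIndependent ℝ ![δ1, δ2]) :
    ∃ ν : ℝ, A.mulVec ((1 - ν) • xk + ν • xk1) = b := by
  subst hδ2 hδ1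
  obtain ⟨ν, hν⟩ := exists_smul_add_smul_eq_zero_of_not_linearIndependent h2 hdep
  have hres : (1 - ν) • rk + ν • rk1 = 0 := by
    refine mulVec_injective_iff_isUnit.2 (isUnit_nonsing_inv_iff.2 hM) ?_
    rwa [mulVec_add, mulVec_smul, mulVec_smul, mulVec_zero]
  refine ⟨ν, (sub_eq_zero.1 ?_).symm⟩
  rw [sub_mulVec_affineCombination, ← hrk, ← hrk1, hres]

/-- If `δ₁ = M̃⁻¹ r_k` and `δ₂ = δ₁ − M̃⁻¹ r_{k−1}` are nonzero and linearly dependent, then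
some affine combination `x* = (1 − ν) x_k + ν x_{k−1}` solves `A x = b` exactly. -/
theorem stmt1 {n : ℕ} (A M : Matrix (Fin n) (Fin n) ℝ)
    (hA : IsUnit A) (hM : IsUnit M)
    (b xk xk1 rk rk1 δ1 δ2 : Fin n → ℝ)
    (hrk : rk = b - A.mulVec xk)
    (hrk1 : rk1 = b - A.mulVec xk1)
    (hδ1 : δ1 = M⁻¹.mulVec rk)
    (hδ2 : δ2 = δ1 - M⁻¹.mulVec rk1)
    (h1 : δ1 ≠ 0) (h2 : δ2 ≠ 0)
    (hdep : ¬ LinearIndependent ℝ ![δ1, δ2]) :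
    ∃ ν : ℝ, A.mulVec ((1 - ν) • xk + ν • xk1) = b :=
  stmt1_general A M hM b xk xk1 rk rk1 δ1 δ2 hrk hrk1 hδ1 hδ2 h2 hdep
end

section
/- Let A and M̃ be real n×n matrices with A and M̃ invertible. Define ξ̃ = inf over all nonzero y ∈ ℝⁿ of |⟨A M̃⁻¹ y, y⟩| / ⟨y, y⟩. Let r, r_prev ∈ ℝⁿ with r ≠ 0, set δ₁ = M̃⁻¹ r and δ₂ = M̃⁻¹ (r − r_prev), and suppose A δ₁ and A δ₂ are linearly independent. With v = (⟨r, A δ₁⟩, ⟨r, A δ₂⟩)ᵀ, (β₁, β₂)ᵀ = W_A(δ₁, δ₂)⁻¹ v and r' = r − β₁ A δ₁ − β₂ A δ₂, the inequality ‖r'‖² ≤ ‖r‖² · ( 1 − (ξ̃² / ‖A M̃⁻¹‖₂²) · ‖r‖² / (‖r‖² + ‖r − r_prev‖²) ) holds. -/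
open Matrix
open scoped RealInnerProductSpace

/-- Action of a real matrix on Euclidean space. -/
noncomputable def mulE {m n : ℕ} (M : Matrix (Fin m) (Fin n) ℝ)
    (x : EuclideanSpace ℝ (Fin n)) : EuclideanSpace ℝ (Fin m) :=
  Matrix.toEuclideanLin M x

/-- The 2×2 Gram matrix `W_A(x, y)`. -/
noncomputable def gram {n : ℕ} (A : Matrix (Fin n) (Fin n) ℝ)
    (x y : EuclideanSpace ℝ (Fin n)) : Matrix (Fin 2) (Fin 2) ℝ :=
  !![⟪mulE A x, mulE A x⟫, ⟪mulE A y, mulE A x⟫;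
     ⟪mulE A x, mulE A y⟫, ⟪mulE A y, mulE A y⟫]

/-!
The update `r' = r - β₀ A δ₁ - β₁ A δ₂` solves the normal equations of the least-squares problem
`min ‖r - w‖` over `w ∈ span {A δ₁, A δ₂}`, so `r'` is orthogonal to that plane and no longer
than the residual `r - t A δ₁` of any correction along `A δ₁ = A M̃⁻¹ r` alone. The best `t` gives
`‖r'‖² ≤ ‖r‖² - ⟪A M̃⁻¹ r, r⟫² / ‖A M̃⁻¹ r‖²`, and `|⟪A M̃⁻¹ r, r⟫| ≥ ξ̃ ‖r‖²` together with
`‖A M̃⁻¹ r‖ ≤ ‖A M̃⁻¹‖₂ ‖r‖` bound the subtracted term below by `ξ̃² / ‖A M̃⁻¹‖₂² · ‖r‖²`.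
The factor `‖r‖² / (‖r‖² + ‖r - r_prev‖²) ≤ 1` only weakens this.
-/

section LeastSquares

variable {E : Type*} [NormedAddCommGroup E] [InnerProductSpace ℝ E] {ι : Type*} [Fintype ι]

theorem gram_mulVec_inv_mulVec [DecidableEq ι] {v : ι → E} (hv : LinearIndependent ℝ v)
    (u : ι → ℝ) : Matrix.gram ℝ v *ᵥ ((Matrix.gram ℝ v)⁻¹ *ᵥ u) = u := by
  have hdet : IsUnit (Matrix.gram ℝ v).det :=
    isUnit_iff_ne_zero.mpr (det_gram_ne_zero_iff_linearIndependent.mpr hv)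
  rw [mulVec_mulVec, mul_nonsing_inv _ hdet, one_mulVec]

variable {v : ι → E} {r : E} {β : ι → ℝ}

theorem inner_sub_sum_smul_eq_zero_of_gram_mulVec
    (hβ : Matrix.gram ℝ v *ᵥ β = fun i ↦ ⟪v i, r⟫) (i : ι) :
    ⟪v i, r - ∑ j, β j • v j⟫ = 0 := by
  have hi := congrFun hβ i
  simp only [mulVec, dotProduct, gram_apply] at hi
  simp [inner_sub_right, inner_sum, real_inner_smul_right, ← hi, mul_comm]

theorem norm_sub_sum_smul_sq_le_of_gram_mulVec
    (hβ : Matrix.gram ℝ v *ᵥ β = fun i ↦ ⟪v i, r⟫) (γ : ι → ℝ) :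
    ‖r - ∑ j, β j • v j‖ ^ 2 ≤ ‖r - ∑ j, γ j • v j‖ ^ 2 := by
  have hdecomp : r - ∑ j, γ j • v j = (r - ∑ j, β j • v j) + ∑ j, (β j - γ j) • v j := by
    simp only [sub_smul, Finset.sum_sub_distrib]
    abel
  have horth : ⟪r - ∑ j, β j • v j, ∑ j, (β j - γ j) • v j⟫ = 0 := by
    simp only [inner_sum, real_inner_smul_right, real_inner_comm (v _),
      inner_sub_sum_smul_eq_zero_of_gram_mulVec hβ, mul_zero, Finset.sum_const_zero]
  rw [hdecomp, norm_add_sq_real, horth, mul_zero, add_zero]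
  exact le_add_of_nonneg_right (sq_nonneg _)

theorem norm_sub_smul_sq_eq (a r : E) :
    ‖r - (⟪a, r⟫ / ‖a‖ ^ 2) • a‖ ^ 2 = ‖r‖ ^ 2 - ⟪a, r⟫ ^ 2 / ‖a‖ ^ 2 := by
  rcases eq_or_ne a 0 with rfl | ha
  · simp
  have hna : ‖a‖ ≠ 0 := norm_ne_zero_iff.mpr ha
  rw [norm_sub_sq_real, real_inner_smul_right, norm_smul, mul_pow, Real.norm_eq_abs, sq_abs,
    real_inner_comm]
  field_simp
  ring

theorem norm_sub_sum_smul_sq_le_sub_inner_sq_div [DecidableEq ι]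
    (hβ : Matrix.gram ℝ v *ᵥ β = fun i ↦ ⟪v i, r⟫) (i : ι) :
    ‖r - ∑ j, β j • v j‖ ^ 2 ≤ ‖r‖ ^ 2 - ⟪v i, r⟫ ^ 2 / ‖v i‖ ^ 2 := by
  have h := norm_sub_sum_smul_sq_le_of_gram_mulVec hβ (Pi.single i (⟪v i, r⟫ / ‖v i‖ ^ 2))
  simpa [Pi.single_apply, ite_smul, norm_sub_smul_sq_eq] using h

theorem div_sq_mul_le_inner_sq_div {a r : E} {ξ s : ℝ} (ha : a ≠ 0) (hξ : 0 ≤ ξ)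
    (hξr : ξ * ‖r‖ ^ 2 ≤ |⟪a, r⟫|) (has : ‖a‖ ≤ s * ‖r‖) :
    ξ ^ 2 / s ^ 2 * ‖r‖ ^ 2 ≤ ⟪a, r⟫ ^ 2 / ‖a‖ ^ 2 := by
  have hna : 0 < ‖a‖ := norm_pos_iff.mpr ha
  have hs : 0 < s := pos_of_mul_pos_left (hna.trans_le has) (norm_nonneg r)
  rw [div_mul_eq_mul_div, div_le_div_iff₀ (by positivity) (by positivity)]
  calc ξ ^ 2 * ‖r‖ ^ 2 * ‖a‖ ^ 2 ≤ ξ ^ 2 * ‖r‖ ^ 2 * (s * ‖r‖) ^ 2 := by gcongr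
    _ = (ξ * ‖r‖ ^ 2) ^ 2 * s ^ 2 := by ring
    _ ≤ |⟪a, r⟫| ^ 2 * s ^ 2 := by gcongr
    _ = ⟪a, r⟫ ^ 2 * s ^ 2 := by rw [sq_abs]

end LeastSquares

section EuclideanMatrix

variable {n : ℕ}

theorem mulE_mul (A B : Matrix (Fin n) (Fin n) ℝ) (x : EuclideanSpace ℝ (Fin n)) :
    mulE (A * B) x = mulE A (mulE B x) := by
  simp [mulE]

theorem norm_mulE_le (A : Matrix (Fin n) (Fin n) ℝ) (x : EuclideanSpace ℝ (Fin n)) :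
    ‖mulE A x‖ ≤ spec A * ‖x‖ :=
  (LinearMap.toContinuousLinearMap (toEuclideanLin A)).le_opNorm x

theorem gram_eq_gram_mulE (A : Matrix (Fin n) (Fin n) ℝ) (x y : EuclideanSpace ℝ (Fin n)) :
    _root_.gram A x y = Matrix.gram ℝ ![mulE A x, mulE A y] := by
  ext i j
  fin_cases i <;> fin_cases j <;> simp [_root_.gram, real_inner_comm]

variable {B : Matrix (Fin n) (Fin n) ℝ} {ξ : ℝ}
  (hξ : ξ = ⨅ y : {y : EuclideanSpace ℝ (Fin n) // y ≠ 0}, |⟪mulE B y.1, y.1⟫| / ⟪y.1, y.1⟫)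
include hξ

theorem nonneg_of_eq_iInf_abs_inner_div : 0 ≤ ξ :=
  hξ ▸ Real.iInf_nonneg fun _ ↦ div_nonneg (abs_nonneg _) real_inner_self_nonneg

theorem mul_norm_sq_le_abs_inner_of_eq_iInf (y : EuclideanSpace ℝ (Fin n)) :
    ξ * ‖y‖ ^ 2 ≤ |⟪mulE B y, y⟫| := by
  rcases eq_or_ne y 0 with rfl | hy
  · simp
  have hbdd : BddBelow (Set.range fun y : {y : EuclideanSpace ℝ (Fin n) // y ≠ 0} ↦
      |⟪mulE B y.1, y.1⟫| / ⟪y.1, y.1⟫) :=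
    ⟨0, by rintro _ ⟨y, rfl⟩; exact div_nonneg (abs_nonneg _) real_inner_self_nonneg⟩
  have h := hξ ▸ ciInf_le hbdd ⟨y, hy⟩
  rwa [real_inner_self_eq_norm_sq, le_div_iff₀ (by positivity)] at h

end EuclideanMatrix

theorem stmt5_general {n : ℕ} (A M : Matrix (Fin n) (Fin n) ℝ)
    (ξ : ℝ)
    (hξ : ξ = ⨅ y : {y : EuclideanSpace ℝ (Fin n) // y ≠ 0},
      |⟪mulE (A * M⁻¹) y.1, y.1⟫| / ⟪y.1, y.1⟫)
    (r rp : EuclideanSpace ℝ (Fin n))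
    (δ1 δ2 : EuclideanSpace ℝ (Fin n))
    (hδ1 : δ1 = mulE M⁻¹ r)
    (hind : LinearIndependent ℝ ![mulE A δ1, mulE A δ2])
    (v : Fin 2 → ℝ) (hv : v = ![⟪r, mulE A δ1⟫, ⟪r, mulE A δ2⟫])
    (β : Fin 2 → ℝ) (hβ : β = (gram A δ1 δ2)⁻¹.mulVec v)
    (r' : EuclideanSpace ℝ (Fin n))
    (hr' : r' = r - β 0 • mulE A δ1 - β 1 • mulE A δ2) :
    ‖r'‖ ^ 2 ≤ ‖r‖ ^ 2 *
      (1 - ξ ^ 2 / spec (A * M⁻¹) ^ 2 * (‖r‖ ^ 2 / (‖r‖ ^ 2 + ‖r - rp‖ ^ 2))) := by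
  set a := mulE A δ1 with ha_def
  set b := mulE A δ2
  have hnormal : Matrix.gram ℝ ![a, b] *ᵥ β = fun i ↦ ⟪![a, b] i, r⟫ := by
    have hv' : v = fun i ↦ ⟪![a, b] i, r⟫ := by
      ext i; fin_cases i <;> simp [hv, real_inner_comm]
    rw [hβ, gram_eq_gram_mulE, hv']
    exact gram_mulVec_inv_mulVec hind _
  have hresidual : ‖r'‖ ^ 2 ≤ ‖r‖ ^ 2 - ⟪a, r⟫ ^ 2 / ‖a‖ ^ 2 := by
    simpa [hr', Fin.sum_univ_two, sub_sub] using
      norm_sub_sum_smul_sq_le_sub_inner_sq_div hnormal 0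
  have ha : a = mulE (A * M⁻¹) r := by rw [ha_def, hδ1, mulE_mul]
  have hdecrease : ξ ^ 2 / spec (A * M⁻¹) ^ 2 * ‖r‖ ^ 2 ≤ ⟪a, r⟫ ^ 2 / ‖a‖ ^ 2 :=
    div_sq_mul_le_inner_sq_div (hind.ne_zero 0) (nonneg_of_eq_iInf_abs_inner_div hξ)
      (ha ▸ mul_norm_sq_le_abs_inner_of_eq_iInf hξ r) (ha ▸ norm_mulE_le _ r)
  have hratio : ‖r‖ ^ 2 / (‖r‖ ^ 2 + ‖r - rp‖ ^ 2) ≤ 1 :=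
    div_le_one_of_le₀ (le_add_of_nonneg_right (sq_nonneg _)) (by positivity)
  calc ‖r'‖ ^ 2 ≤ ‖r‖ ^ 2 * (1 - ξ ^ 2 / spec (A * M⁻¹) ^ 2) := by linarith
    _ ≤ _ := by gcongr; exact mul_le_of_le_one_right (by positivity) hratio

/-- One-step residual reduction estimate for the two-dimensional minimum residual update:
`‖r'‖² ≤ ‖r‖² (1 − (ξ̃²/‖A M̃⁻¹‖₂²) · ‖r‖²/(‖r‖² + ‖r − r_prev‖²))`, where
`ξ̃ = inf_{y ≠ 0} |⟨A M̃⁻¹ y, y⟩|/⟨y, y⟩`. -/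
theorem stmt5 {n : ℕ} (A M : Matrix (Fin n) (Fin n) ℝ)
    (hA : IsUnit A) (hM : IsUnit M)
    (ξ : ℝ)
    (hξ : ξ = ⨅ y : {y : EuclideanSpace ℝ (Fin n) // y ≠ 0},
      |⟪mulE (A * M⁻¹) y.1, y.1⟫| / ⟪y.1, y.1⟫)
    (r rp : EuclideanSpace ℝ (Fin n)) (hr : r ≠ 0)
    (δ1 δ2 : EuclideanSpace ℝ (Fin n))
    (hδ1 : δ1 = mulE M⁻¹ r)
    (hδ2 : δ2 = mulE M⁻¹ (r - rp))
    (hind : LinearIndependent ℝ ![mulE A δ1, mulE A δ2])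
    (v : Fin 2 → ℝ) (hv : v = ![⟪r, mulE A δ1⟫, ⟪r, mulE A δ2⟫])
    (β : Fin 2 → ℝ) (hβ : β = (gram A δ1 δ2)⁻¹.mulVec v)
    (r' : EuclideanSpace ℝ (Fin n))
    (hr' : r' = r - β 0 • mulE A δ1 - β 1 • mulE A δ2) :
    ‖r'‖ ^ 2 ≤ ‖r‖ ^ 2 *
      (1 - ξ ^ 2 / spec (A * M⁻¹) ^ 2 * (‖r‖ ^ 2 / (‖r‖ ^ 2 + ‖r - rp‖ ^ 2))) :=
  stmt5_general A M ξ hξ r rp δ1 δ2 hδ1 hind v hv β hβ r' hr'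
end

section
/- Let (a_k)_{k≥0} be a nonincreasing sequence of nonnegative real numbers, and let c be a constant with 0 < c ≤ 1 such that for all k ≥ 1, a_{k+1}² ≤ a_k² · ( 1 − c · a_k² / (a_k² + (a_k + a_{k−1})²) ), with the convention that the factor is 1 when a_k = 0. Then a_k → 0 as k → ∞. -/
/-!
The sequence is nonincreasing and bounded below, so it has a limit `L ≥ 0`. If `L > 0`, every
`a k` is positive, the recursion gives `c · a_k² · ρ_k ≤ a_k² - a_{k+1}²` with
`ρ_k = a_k² / (a_k² + (a_k + a_{k-1})²)`, and passing to the limit yields `c L² / 5 ≤ 0`,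
which is absurd.
-/

open Filter Topology

theorem tendsto_sub_succ_nhds_zero {G : Type*} [AddCommGroup G] [TopologicalSpace G]
    [IsTopologicalAddGroup G] {u : ℕ → G} {l : G} (hu : Tendsto u atTop (𝓝 l)) :
    Tendsto (fun k => u k - u (k + 1)) atTop (𝓝 0) := by
  simpa using hu.sub (hu.comp (tendsto_add_atTop_nat 1))

theorem tendsto_sq_div_sq_add_sq_add_pred {a : ℕ → ℝ} {L : ℝ} (hL : L ≠ 0)
    (ha : Tendsto a atTop (𝓝 L)) :
    Tendsto (fun k => a k ^ 2 / (a k ^ 2 + (a k + a (k - 1)) ^ 2)) atTop (𝓝 (1 / 5)) := by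
  have ha_pred : Tendsto (fun k => a (k - 1)) atTop (𝓝 L) := ha.comp (tendsto_sub_atTop_nat 1)
  have hden : L ^ 2 + (L + L) ^ 2 ≠ 0 := by positivity
  have hlim := (ha.pow 2).div ((ha.pow 2).add ((ha.add ha_pred).pow 2)) hden
  rwa [show L ^ 2 / (L ^ 2 + (L + L) ^ 2) = 1 / 5 by field_simp; ring] at hlim

theorem stmt7_general (a : ℕ → ℝ) (hnn : ∀ k, 0 ≤ a k) (hmono : ∀ k, a (k + 1) ≤ a k)
    (c : ℝ) (hc0 : 0 < c)
    (hrec : ∀ k, 1 ≤ k → a (k + 1) ^ 2 ≤ a k ^ 2 *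
      (1 - c * (if a k = 0 then 1
        else a k ^ 2 / (a k ^ 2 + (a k + a (k - 1)) ^ 2)))) :
    Filter.Tendsto a Filter.atTop (nhds 0) := by
  have ha : Antitone a := antitone_nat_of_succ_le hmono
  obtain ⟨L, hL⟩ : ∃ L, Tendsto a atTop (𝓝 L) :=
    ⟨_, tendsto_atTop_ciInf ha ⟨0, by rintro _ ⟨k, rfl⟩; exact hnn k⟩⟩
  obtain rfl | hLpos := (ge_of_tendsto' hL hnn).eq_or_lt'
  · exact hL
  have hdec : ∀ k ≥ 1, c * (a k ^ 2 * (a k ^ 2 / (a k ^ 2 + (a k + a (k - 1)) ^ 2)))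
      ≤ a k ^ 2 - a (k + 1) ^ 2 := by
    intro k hk
    have hrec_k := hrec k hk
    rw [if_neg (hLpos.trans_le (ha.le_of_tendsto hL k)).ne'] at hrec_k
    linarith
  have hlim := le_of_tendsto_of_tendsto
    (((hL.pow 2).mul (tendsto_sq_div_sq_add_sq_add_pred hLpos.ne' hL)).const_mul c)
    (tendsto_sub_succ_nhds_zero (hL.pow 2)) (eventually_atTop.2 ⟨1, hdec⟩)
  have hpos : 0 < c * (L ^ 2 * (1 / 5)) := by positivity
  linarith

/-- If `(a_k)` is a nonincreasing sequence of nonnegative reals and `0 < c ≤ 1` is such that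
for all `k ≥ 1`, `a_{k+1}² ≤ a_k² (1 − c · a_k²/(a_k² + (a_k + a_{k−1})²))`
(with the factor read as `1` when `a_k = 0`), then `a_k → 0`. -/
theorem stmt7 (a : ℕ → ℝ) (hnn : ∀ k, 0 ≤ a k) (hmono : ∀ k, a (k + 1) ≤ a k)
    (c : ℝ) (hc0 : 0 < c) (hc1 : c ≤ 1)
    (hrec : ∀ k, 1 ≤ k → a (k + 1) ^ 2 ≤ a k ^ 2 *
      (1 - c * (if a k = 0 then 1
        else a k ^ 2 / (a k ^ 2 + (a k + a (k - 1)) ^ 2)))) :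
    Filter.Tendsto a Filter.atTop (nhds 0) :=
  stmt7_general a hnn hmono c hc0 hrec
end

section
/- Let A be a real m×n matrix and γ > 0 a real number. Set S = γ I_n + Aᵀ A (which is symmetric positive definite, hence invertible). Then ‖S⁻¹ Aᵀ‖₂ ≤ 1 / (2 √γ). -/
/-!
If `S y = Aᵀ x`, pairing with `y` gives `γ‖y‖² + ‖Ay‖² = ⟪Ay, x⟫ ≤ ‖Ay‖ ‖x‖`, while AM–GM bounds
the left-hand side below by `2√γ ‖y‖ ‖Ay‖`; hence `2√γ ‖y‖ ≤ ‖x‖`. Positive definiteness of `S` is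
that of `γ I` plus the positive semidefiniteness of `AᵀA`.
-/

open Matrix

open RealInnerProductSpace

theorem two_mul_le_of_sq_add_sq_le_mul {u b c : ℝ} (hb : 0 ≤ b) (hc : 0 ≤ c)
    (h : u ^ 2 + b ^ 2 ≤ b * c) : 2 * u ≤ c := by
  rcases hb.eq_or_lt with rfl | hb
  · nlinarith
  · nlinarith [sq_nonneg (u - b)]

section
variable {E F : Type*} [NormedAddCommGroup E] [InnerProductSpace ℝ E] [FiniteDimensional ℝ E]
  [NormedAddCommGroup F] [InnerProductSpace ℝ F] [FiniteDimensional ℝ F]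

theorem LinearMap.mul_norm_sq_add_norm_sq_eq_inner (T : E →ₗ[ℝ] F) {γ : ℝ} {x : F} {y : E}
    (hy : γ • y + T.adjoint (T y) = T.adjoint x) : γ * ‖y‖ ^ 2 + ‖T y‖ ^ 2 = ⟪T y, x⟫ := by
  have := congrArg (⟪y, ·⟫) hy
  simpa only [inner_add_right, real_inner_smul_right, LinearMap.adjoint_inner_right,
    real_inner_self_eq_norm_sq] using this

theorem LinearMap.two_mul_sqrt_mul_norm_le (T : E →ₗ[ℝ] F) {γ : ℝ} (hγ : 0 ≤ γ) {x : F} {y : E}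
    (hy : γ • y + T.adjoint (T y) = T.adjoint x) : 2 * √γ * ‖y‖ ≤ ‖x‖ := by
  rw [mul_assoc]
  refine two_mul_le_of_sq_add_sq_le_mul (norm_nonneg (T y)) (norm_nonneg x) ?_
  calc (√γ * ‖y‖) ^ 2 + ‖T y‖ ^ 2 = ⟪T y, x⟫ := by
        rw [mul_pow, Real.sq_sqrt hγ, T.mul_norm_sq_add_norm_sq_eq_inner hy]
    _ ≤ ‖T y‖ * ‖x‖ := real_inner_le_norm _ _

end

theorem Matrix.two_mul_sqrt_mul_norm_le {m n : Type*} [Fintype m] [Fintype n] [DecidableEq m]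
    [DecidableEq n] (A : Matrix m n ℝ) {γ : ℝ} (hγ : 0 ≤ γ) {x : EuclideanSpace ℝ m}
    {y : EuclideanSpace ℝ n} (hy : toEuclideanLin (γ • 1 + Aᵀ * A) y = toEuclideanLin Aᵀ x) :
    2 * √γ * ‖y‖ ≤ ‖x‖ := by
  rw [map_add, map_smul, toLpLin_one, toLpLin_mul_same, ← conjTranspose_eq_transpose_of_trivial,
    toEuclideanLin_conjTranspose_eq_adjoint] at hy
  exact A.toEuclideanLin.two_mul_sqrt_mul_norm_le hγ hy

/-- For `S = γ I + AᵀA` with `γ > 0`, `S` is symmetric positive definite (hence invertible)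
and `‖S⁻¹ Aᵀ‖₂ ≤ 1/(2√γ)`. -/
theorem stmt10 {m n : ℕ} (A : Matrix (Fin m) (Fin n) ℝ) (γ : ℝ) (hγ : 0 < γ)
    (S : Matrix (Fin n) (Fin n) ℝ)
    (hS : S = γ • (1 : Matrix (Fin n) (Fin n) ℝ) + Aᵀ * A) :
    S.PosDef ∧ spec (S⁻¹ * Aᵀ) ≤ 1 / (2 * Real.sqrt γ) := by
  have hpd : S.PosDef := hS ▸ (PosDef.one.smul hγ).add_posSemidef
    (conjTranspose_eq_transpose_of_trivial A ▸ posSemidef_conjTranspose_mul_self A)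
  refine ⟨hpd, ContinuousLinearMap.opNorm_le_bound _ (by positivity) fun x => ?_⟩
  have hy : toEuclideanLin S (toEuclideanLin (S⁻¹ * Aᵀ) x) = toEuclideanLin Aᵀ x := by
    rw [← LinearMap.comp_apply, ← toLpLin_mul_same,
      mul_nonsing_inv_cancel_left _ _ ((isUnit_iff_isUnit_det S).mp hpd.isUnit)]
  rw [one_div_mul_eq_div, le_div_iff₀' (by positivity)]
  exact A.two_mul_sqrt_mul_norm_le hγ.le (hS ▸ hy)
end

section
/- Let A be a real m×n matrix, μ ≥ 0 and γ > 0 real numbers, and set ε = γ − μ². Let K = [I_m, A; −Aᵀ, μ² I_n], T = [I_m, A; −Aᵀ, γ I_n], and S = γ I_n + Aᵀ A. Then T is invertible and K T⁻¹ = I_{m+n} − ε · B, where B is the block matrix [0, 0; S⁻¹ Aᵀ, S⁻¹] (zero blocks in the first block-row, S⁻¹Aᵀ and S⁻¹ in the second block-row). -/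
/-!
`K` differs from `T` only in its lower right block: `K = T - ε • fromBlocks 0 0 0 1`. Hence
`K T⁻¹ = 1 - ε • fromBlocks 0 0 0 1 * T⁻¹`, and left multiplication by `fromBlocks 0 0 0 1` keeps
only the lower block row of `T⁻¹`. Since the upper left block of `T` is the identity, `T` is
invertible as soon as its Schur complement `γ I + AᵀA = S` is, which holds because `S` is
positive definite, and the lower block row of `T⁻¹` is then `(S⁻¹Aᵀ, S⁻¹)`.
-/

open Matrix

namespace Matrix

variable {l m n p q α : Type*} [Fintype m] [Fintype n]

theorem fromBlocks_zero_zero_zero_one_mul [Semiring α] [DecidableEq n]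
    (P : Matrix m p α) (Q : Matrix m q α) (R : Matrix n p α) (D : Matrix n q α) :
    fromBlocks (0 : Matrix l m α) 0 0 (1 : Matrix n n α) * fromBlocks P Q R D =
      fromBlocks 0 0 R D := by
  simp only [fromBlocks_multiply, Matrix.zero_mul, Matrix.one_mul, add_zero, zero_add]

section SchurComplement

variable [DecidableEq m] [DecidableEq n] [CommRing α]

theorem fromBlocks_one₁₁_mul_eq_one (B : Matrix m n α) (C : Matrix n m α) (D : Matrix n n α)
    (hS : IsUnit (D - C * B)) :
    fromBlocks 1 B C D * fromBlocks (1 + B * (D - C * B)⁻¹ * C) (-(B * (D - C * B)⁻¹))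
      (-((D - C * B)⁻¹ * C)) (D - C * B)⁻¹ = 1 := by
  set S := D - C * B with hS_def
  have hD : D = S + C * B := by rw [hS_def]; abel
  have hSS : S * S⁻¹ = 1 := mul_nonsing_inv S ((isUnit_iff_isUnit_det S).1 hS)
  rw [fromBlocks_multiply, ← fromBlocks_one, hD]
  congr 1 <;>
    simp only [Matrix.one_mul, Matrix.mul_add, Matrix.add_mul, Matrix.mul_neg, Matrix.mul_one,
      ← Matrix.mul_assoc, hSS] <;>
    abel

theorem isUnit_fromBlocks_one₁₁ (B : Matrix m n α) (C : Matrix n m α) (D : Matrix n n α)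
    (hS : IsUnit (D - C * B)) : IsUnit (fromBlocks 1 B C D) :=
  .of_mul_eq_one _ (fromBlocks_one₁₁_mul_eq_one B C D hS)

theorem inv_fromBlocks_one₁₁ (B : Matrix m n α) (C : Matrix n m α) (D : Matrix n n α)
    (hS : IsUnit (D - C * B)) :
    (fromBlocks 1 B C D)⁻¹ = fromBlocks (1 + B * (D - C * B)⁻¹ * C) (-(B * (D - C * B)⁻¹))
      (-((D - C * B)⁻¹ * C)) (D - C * B)⁻¹ :=
  inv_eq_right_inv (fromBlocks_one₁₁_mul_eq_one B C D hS)

end SchurComplement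

theorem posDef_smul_one_add_transpose_mul_self [DecidableEq n] {γ : ℝ} (hγ : 0 < γ)
    (A : Matrix m n ℝ) : (γ • 1 + Aᵀ * A).PosDef :=
  (PosDef.one.smul hγ).add_posSemidef (posSemidef_conjTranspose_mul_self A)

end Matrix

theorem stmt13_general {m n : ℕ} (A : Matrix (Fin m) (Fin n) ℝ) (μ γ ε : ℝ)
    (hγ : 0 < γ) (hε : ε = γ - μ ^ 2)
    (K T : Matrix (Fin m ⊕ Fin n) (Fin m ⊕ Fin n) ℝ)
    (hK : K = Matrix.fromBlocks 1 A (-Aᵀ) (μ ^ 2 • (1 : Matrix (Fin n) (Fin n) ℝ)))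
    (hT : T = Matrix.fromBlocks 1 A (-Aᵀ) (γ • (1 : Matrix (Fin n) (Fin n) ℝ)))
    (S : Matrix (Fin n) (Fin n) ℝ)
    (hS : S = γ • (1 : Matrix (Fin n) (Fin n) ℝ) + Aᵀ * A) :
    IsUnit T ∧
      K * T⁻¹ = 1 - ε • Matrix.fromBlocks 0 0 (S⁻¹ * Aᵀ) S⁻¹ := by
  have hSchur : γ • (1 : Matrix (Fin n) (Fin n) ℝ) - -Aᵀ * A = S := by
    rw [hS, Matrix.neg_mul, sub_neg_eq_add]
  have hSu : IsUnit (γ • (1 : Matrix (Fin n) (Fin n) ℝ) - -Aᵀ * A) := by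
    rw [hSchur, hS]
    exact (posDef_smul_one_add_transpose_mul_self hγ A).isUnit
  have hTu : IsUnit T := hT ▸ isUnit_fromBlocks_one₁₁ _ _ _ hSu
  have hKT : K = T - ε • fromBlocks 0 0 0 1 := by
    rw [hK, hT, hε, eq_sub_iff_add_eq, fromBlocks_smul, fromBlocks_add]
    congr 1 <;> module
  refine ⟨hTu, ?_⟩
  rw [hKT, Matrix.sub_mul, mul_nonsing_inv T ((isUnit_iff_isUnit_det T).1 hTu), smul_mul_assoc,
    hT, inv_fromBlocks_one₁₁ _ _ _ hSu, fromBlocks_zero_zero_zero_one_mul, hSchur,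
    Matrix.mul_neg, neg_neg]

/-- With `K = [I, A; −Aᵀ, μ² I]`, `T = [I, A; −Aᵀ, γ I]`, `S = γ I + AᵀA` and
`ε = γ − μ²`, `T` is invertible and `K T⁻¹ = I − ε [0, 0; S⁻¹Aᵀ, S⁻¹]`. -/
theorem stmt13 {m n : ℕ} (A : Matrix (Fin m) (Fin n) ℝ) (μ γ ε : ℝ)
    (hμ : 0 ≤ μ) (hγ : 0 < γ) (hε : ε = γ - μ ^ 2)
    (K T : Matrix (Fin m ⊕ Fin n) (Fin m ⊕ Fin n) ℝ)
    (hK : K = Matrix.fromBlocks 1 A (-Aᵀ) (μ ^ 2 • (1 : Matrix (Fin n) (Fin n) ℝ)))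
    (hT : T = Matrix.fromBlocks 1 A (-Aᵀ) (γ • (1 : Matrix (Fin n) (Fin n) ℝ)))
    (S : Matrix (Fin n) (Fin n) ℝ)
    (hS : S = γ • (1 : Matrix (Fin n) (Fin n) ℝ) + Aᵀ * A) :
    IsUnit T ∧
      K * T⁻¹ = 1 - ε • Matrix.fromBlocks 0 0 (S⁻¹ * Aᵀ) S⁻¹ :=
  stmt13_general A μ γ ε hγ hε K T hK hT S hS
end

section
/- Let A be a real m×n matrix, μ ≥ 0, and γ > μ². Set K = [I_m, A; −Aᵀ, μ² I_n], T = [I_m, A; −Aᵀ, γ I_n], η̄ = (γ − μ²)/(2√γ), and let λ_min denote the smallest eigenvalue of AᵀA. Then for every nonzero x ∈ ℂ^{m+n}, the real part of ⟨K T⁻¹ x, x⟩ / ⟨x, x⟩ lies in the open interval ( (μ² + λ_min)/(γ + λ_min) − η̄ , 1 + η̄ ). -/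
/-!
For a real vector `y = (u, v)` put `w = T⁻¹ y` and let `q` be its second block. Since `K` and `T`
differ only in the `(2,2)` block, `K w = y + (μ² - γ) (0, q)`, hence
`⟨K T⁻¹ y, y⟩ = ‖y‖² + (μ² - γ) ⟨v, q⟩`, and eliminating the first block of `T w = y` gives
`(γ I + AᵀA) q = v + Aᵀ u`. Writing `v = (γ I + AᵀA) z`, symmetry turns `⟨v, q⟩` into
`⟨z, v⟩ + ⟨A z, u⟩`. The first term lies in `[0, ‖v‖² / (γ + λ_min)]`, and AM-GM applied to
`‖v‖² = γ² ‖z‖² + 2γ ‖A z‖² + ‖AᵀA z‖²` gives `4γ ‖A z‖² ≤ ‖v‖²`, so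
`|⟨A z, u⟩| ≤ ‖y‖² / (4√γ)`. The real part of the complex form is the sum of the real forms at
`Re x` and `Im x`. The margin obtained is `(γ - μ²) / (4√γ) = η̄ / 2`, which makes both
inequalities strict.
-/

open Matrix
open scoped ComplexInnerProductSpace

/-- Action of a (complexified) real matrix on complex Euclidean space. -/
noncomputable def mulEC {ι : Type} [Fintype ι] [DecidableEq ι]
    (W : Matrix ι ι ℝ) (x : EuclideanSpace ℂ ι) : EuclideanSpace ℂ ι :=
  Matrix.toEuclideanLin (W.map Complex.ofReal) x

theorem sq_dotProduct_le {ι : Type*} [Fintype ι] (u v : ι → ℝ) :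
    (u ⬝ᵥ v) ^ 2 ≤ (u ⬝ᵥ u) * (v ⬝ᵥ v) := by
  simpa only [dotProduct, sq] using Finset.sum_mul_sq_le_sq_mul_sq Finset.univ u v

theorem dotProduct_self_nonneg {ι : Type*} [Fintype ι] (u : ι → ℝ) : 0 ≤ u ⬝ᵥ u := by
  simpa using dotProduct_star_self_nonneg u

open scoped MatrixOrder in
theorem Matrix.IsHermitian.iInf_eigenvalues_mul_dotProduct_self_le {n : Type*} [Fintype n]
    [DecidableEq n] {H : Matrix n n ℝ} (hH : H.IsHermitian) (z : n → ℝ) :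
    (⨅ i, hH.eigenvalues i) * (z ⬝ᵥ z) ≤ z ⬝ᵥ (H *ᵥ z) := by
  have hle : algebraMap ℝ (Matrix n n ℝ) (⨅ i, hH.eigenvalues i) ≤ H := by
    refine algebraMap_le_of_le_spectrum (fun r hr => ?_) hH
    rw [hH.spectrum_real_eq_range_eigenvalues] at hr
    obtain ⟨i, rfl⟩ := hr
    exact ciInf_le (Finite.bddBelow_range _) i
  have := (Matrix.le_iff.mp hle).dotProduct_mulVec_nonneg z
  rwa [star_trivial, sub_mulVec, dotProduct_sub, Algebra.algebraMap_eq_smul_one, smul_mulVec,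
    one_mulVec, dotProduct_smul, smul_eq_mul, sub_nonneg] at this

theorem Matrix.mulVec_inv_mulVec_of_isUnit_det {ι R : Type*} [Fintype ι] [DecidableEq ι]
    [CommRing R] {M : Matrix ι ι R} (hM : IsUnit M.det) (y : ι → R) : M *ᵥ (M⁻¹ *ᵥ y) = y := by
  rw [mulVec_mulVec, mul_nonsing_inv _ hM, one_mulVec]

theorem two_mul_mul_le_sq_mul_add (γ : ℝ) {a b t : ℝ} (ha : 0 ≤ a) (hb : 0 ≤ b)
    (h : t ^ 2 ≤ a * b) : 2 * γ * t ≤ γ ^ 2 * a + b := by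
  rcases ha.eq_or_lt with ha | ha
  · have ht : t = 0 := by rw [← ha, zero_mul] at h; nlinarith
    rw [← ha, ht]; linarith
  · -- `a * (γ²a + b - 2γt) = (γa - t)² + (ab - t²)`
    nlinarith [sq_nonneg (γ * a - t)]

theorem mul_le_of_sq_le_mul {a b t ℓ : ℝ} (ht : 0 ≤ t) (hb : 0 ≤ b) (h : t ^ 2 ≤ a * b)
    (hℓ : ℓ * a ≤ t) : ℓ * t ≤ b := by
  rcases ht.eq_or_lt with ht | ht
  · rw [← ht, mul_zero]; exact hb
  rcases le_or_gt ℓ 0 with hℓ0 | hℓ0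
  · nlinarith
  · nlinarith [mul_le_mul_of_nonneg_right hℓ hb]

section RegularizedNormalMatrix

variable {m n : Type*} [Fintype m] [Fintype n] (A : Matrix m n ℝ)

theorem dotProduct_smul_add_transpose_mulVec (γ : ℝ) (z : n → ℝ) :
    z ⬝ᵥ (γ • z + Aᵀ *ᵥ (A *ᵥ z)) = γ * (z ⬝ᵥ z) + A *ᵥ z ⬝ᵥ A *ᵥ z := by
  rw [dotProduct_add, dotProduct_smul, smul_eq_mul, dotProduct_transpose_mulVec]

theorem smul_add_transpose_mulVec_dotProduct_comm (γ : ℝ) (z q : n → ℝ) :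
    (γ • z + Aᵀ *ᵥ (A *ᵥ z)) ⬝ᵥ q = z ⬝ᵥ (γ • q + Aᵀ *ᵥ (A *ᵥ q)) := by
  rw [add_dotProduct, dotProduct_add, smul_dotProduct, dotProduct_smul,
    dotProduct_comm (Aᵀ *ᵥ _) q, dotProduct_transpose_mulVec, dotProduct_transpose_mulVec,
    dotProduct_comm (A *ᵥ q), dotProduct_comm z q]

theorem smul_add_transpose_mulVec_dotProduct_self (γ : ℝ) (z : n → ℝ) :
    (γ • z + Aᵀ *ᵥ (A *ᵥ z)) ⬝ᵥ (γ • z + Aᵀ *ᵥ (A *ᵥ z)) =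
      γ ^ 2 * (z ⬝ᵥ z) + 2 * γ * (A *ᵥ z ⬝ᵥ A *ᵥ z) +
        Aᵀ *ᵥ (A *ᵥ z) ⬝ᵥ Aᵀ *ᵥ (A *ᵥ z) := by
  simp only [add_dotProduct, dotProduct_add, smul_dotProduct, dotProduct_smul, smul_eq_mul]
  rw [dotProduct_comm (Aᵀ *ᵥ _) z, dotProduct_transpose_mulVec]
  ring

theorem four_mul_mulVec_dotProduct_self_le (γ : ℝ) (z : n → ℝ) :
    4 * γ * (A *ᵥ z ⬝ᵥ A *ᵥ z) ≤ (γ • z + Aᵀ *ᵥ (A *ᵥ z)) ⬝ᵥ (γ • z + Aᵀ *ᵥ (A *ᵥ z)) := by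
  have hcs := sq_dotProduct_le z (Aᵀ *ᵥ (A *ᵥ z))
  rw [dotProduct_transpose_mulVec] at hcs
  rw [smul_add_transpose_mulVec_dotProduct_self]
  linarith [two_mul_mul_le_sq_mul_add γ (dotProduct_self_nonneg z) (dotProduct_self_nonneg _) hcs]

theorem add_mul_dotProduct_smul_add_transpose_mulVec_le {γ ℓ : ℝ} (z : n → ℝ) (hγ : 0 ≤ γ)
    (hℓ : ℓ * (z ⬝ᵥ z) ≤ A *ᵥ z ⬝ᵥ A *ᵥ z) :
    (γ + ℓ) * (z ⬝ᵥ (γ • z + Aᵀ *ᵥ (A *ᵥ z))) ≤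
      (γ • z + Aᵀ *ᵥ (A *ᵥ z)) ⬝ᵥ (γ • z + Aᵀ *ᵥ (A *ᵥ z)) := by
  have hcs := sq_dotProduct_le z (Aᵀ *ᵥ (A *ᵥ z))
  rw [dotProduct_transpose_mulVec] at hcs
  rw [dotProduct_smul_add_transpose_mulVec, smul_add_transpose_mulVec_dotProduct_self]
  nlinarith [mul_le_mul_of_nonneg_left hℓ hγ,
    mul_le_of_sq_le_mul (dotProduct_self_nonneg _) (dotProduct_self_nonneg _) hcs hℓ]

variable [DecidableEq n]

theorem posDef_smul_one_add_transpose_mul {γ : ℝ} (hγ : 0 < γ) : (γ • 1 + Aᵀ * A).PosDef := by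
  refine (PosDef.one.smul hγ).add_posSemidef ?_
  simpa using posSemidef_conjTranspose_mul_self A

theorem exists_smul_add_transpose_mulVec_eq {γ : ℝ} (hγ : 0 < γ) (v : n → ℝ) :
    ∃ z, γ • z + Aᵀ *ᵥ (A *ᵥ z) = v := by
  obtain ⟨z, hz⟩ :=
    mulVec_surjective_iff_isUnit.mpr (posDef_smul_one_add_transpose_mul A hγ).isUnit v
  refine ⟨z, ?_⟩
  rwa [add_mulVec, smul_mulVec, one_mulVec, ← mulVec_mulVec] at hz

theorem dotProduct_mem_Icc_of_smul_add_transpose_mulVec_eq {γ ℓ : ℝ} (hγ : 0 < γ)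
    (hℓ : ∀ z, ℓ * (z ⬝ᵥ z) ≤ A *ᵥ z ⬝ᵥ A *ᵥ z) (hγℓ : 0 < γ + ℓ) {u : m → ℝ} {v q : n → ℝ}
    (hq : γ • q + Aᵀ *ᵥ (A *ᵥ q) = v + Aᵀ *ᵥ u) :
    v ⬝ᵥ q ∈ Set.Icc (-(u ⬝ᵥ u + v ⬝ᵥ v) / (4 * √γ))
      (v ⬝ᵥ v / (γ + ℓ) + (u ⬝ᵥ u + v ⬝ᵥ v) / (4 * √γ)) := by
  obtain ⟨z, rfl⟩ := exists_smul_add_transpose_mulVec_eq A hγ v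
  set v := γ • z + Aᵀ *ᵥ (A *ᵥ z) with hv
  have hsplit : v ⬝ᵥ q = z ⬝ᵥ v + A *ᵥ z ⬝ᵥ u := by
    rw [hv, smul_add_transpose_mulVec_dotProduct_comm, hq, dotProduct_add,
      dotProduct_transpose_mulVec, dotProduct_comm u]
  have hzv : z ⬝ᵥ v ≤ v ⬝ᵥ v / (γ + ℓ) :=
    (le_div_iff₀' hγℓ).mpr (add_mul_dotProduct_smul_add_transpose_mulVec_le A z hγ.le (hℓ z))
  have hzv0 : 0 ≤ z ⬝ᵥ v := by
    rw [hv, dotProduct_smul_add_transpose_mulVec]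
    exact add_nonneg (mul_nonneg hγ.le (dotProduct_self_nonneg z)) (dotProduct_self_nonneg _)
  have hcross : |A *ᵥ z ⬝ᵥ u| ≤ (u ⬝ᵥ u + v ⬝ᵥ v) / (4 * √γ) := by
    have hg : 0 < 4 * √γ := by positivity
    rw [le_div_iff₀ hg, ← abs_of_pos hg, ← abs_mul]
    refine abs_le_of_sq_le_sq ?_ (add_nonneg (dotProduct_self_nonneg u) (dotProduct_self_nonneg v))
    have hcs := sq_dotProduct_le (A *ᵥ z) u
    have h4 := four_mul_mulVec_dotProduct_self_le A γ z
    rw [mul_pow, mul_pow, Real.sq_sqrt hγ.le]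
    nlinarith [sq_nonneg (u ⬝ᵥ u - v ⬝ᵥ v), dotProduct_self_nonneg u]
  rw [hsplit, neg_div]
  constructor <;> linarith [abs_le.mp hcross]

end RegularizedNormalMatrix

section AugmentedMatrix

variable {m n : Type*} [Fintype m] [Fintype n] [DecidableEq m] [DecidableEq n]

def augmentedMatrix (A : Matrix m n ℝ) (δ : ℝ) : Matrix (m ⊕ n) (m ⊕ n) ℝ :=
  fromBlocks 1 A (-Aᵀ) (δ • 1)

variable (A : Matrix m n ℝ)

theorem augmentedMatrix_mulVec (δ : ℝ) (p : m → ℝ) (q : n → ℝ) :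
    augmentedMatrix A δ *ᵥ Sum.elim p q = Sum.elim (p + A *ᵥ q) (δ • q - Aᵀ *ᵥ p) := by
  rw [augmentedMatrix, fromBlocks_mulVec]
  simp [sub_eq_neg_add, smul_mulVec, Matrix.neg_mulVec]

theorem augmentedMatrix_mulVec_eq_add (δ γ : ℝ) (p : m → ℝ) (q : n → ℝ) :
    augmentedMatrix A δ *ᵥ Sum.elim p q =
      augmentedMatrix A γ *ᵥ Sum.elim p q + Sum.elim (0 : m → ℝ) ((δ - γ) • q) := by
  rw [augmentedMatrix_mulVec, augmentedMatrix_mulVec, ← Sum.elim_add_add, add_zero, sub_smul]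
  abel_nf

theorem det_augmentedMatrix (δ : ℝ) : (augmentedMatrix A δ).det = (δ • 1 + Aᵀ * A).det := by
  rw [augmentedMatrix, det_fromBlocks_one₁₁, Matrix.neg_mul, sub_neg_eq_add]

theorem isUnit_det_augmentedMatrix {γ : ℝ} (hγ : 0 < γ) : IsUnit (augmentedMatrix A γ).det := by
  rw [det_augmentedMatrix, ← isUnit_iff_isUnit_det]
  exact (posDef_smul_one_add_transpose_mul A hγ).isUnit

theorem dotProduct_mulVec_augmentedMatrix_mul_inv {γ : ℝ} (hT : IsUnit (augmentedMatrix A γ).det)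
    (δ : ℝ) (y : m ⊕ n → ℝ) :
    y ⬝ᵥ ((augmentedMatrix A δ * (augmentedMatrix A γ)⁻¹) *ᵥ y) =
      y ⬝ᵥ y + (δ - γ) * (y ∘ Sum.inr ⬝ᵥ ((augmentedMatrix A γ)⁻¹ *ᵥ y) ∘ Sum.inr) := by
  have hw := mulVec_inv_mulVec_of_isUnit_det hT y
  rw [← mulVec_mulVec]
  generalize (augmentedMatrix A γ)⁻¹ *ᵥ y = w at hw ⊢
  have hKw : augmentedMatrix A δ *ᵥ w = y + Sum.elim (0 : m → ℝ) ((δ - γ) • (w ∘ Sum.inr)) := by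
    conv_lhs => rw [← Sum.elim_comp_inl_inr w]
    rw [augmentedMatrix_mulVec_eq_add, Sum.elim_comp_inl_inr, hw]
  rw [hKw, dotProduct_add]
  simp [dotProduct, Fintype.sum_sum_type, Finset.mul_sum, mul_left_comm]

theorem smul_add_transpose_mulVec_eq_of_augmentedMatrix_mulVec_eq {γ : ℝ} {w y : m ⊕ n → ℝ}
    (h : augmentedMatrix A γ *ᵥ w = y) :
    γ • (w ∘ Sum.inr) + Aᵀ *ᵥ (A *ᵥ (w ∘ Sum.inr)) = y ∘ Sum.inr + Aᵀ *ᵥ (y ∘ Sum.inl) := by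
  rw [← Sum.elim_comp_inl_inr w, augmentedMatrix_mulVec] at h
  rw [← h]
  simp only [Sum.elim_comp_inl, Sum.elim_comp_inr, mulVec_add]
  abel

theorem dotProduct_inv_augmentedMatrix_mulVec_mem_Icc {γ ℓ : ℝ} (hγ : 0 < γ)
    (hℓ : ∀ z, ℓ * (z ⬝ᵥ z) ≤ A *ᵥ z ⬝ᵥ A *ᵥ z) (hγℓ : 0 < γ + ℓ) (y : m ⊕ n → ℝ) :
    y ∘ Sum.inr ⬝ᵥ ((augmentedMatrix A γ)⁻¹ *ᵥ y) ∘ Sum.inr ∈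
      Set.Icc (-(y ⬝ᵥ y) / (4 * √γ)) (y ⬝ᵥ y / (γ + ℓ) + y ⬝ᵥ y / (4 * √γ)) := by
  have hw := mulVec_inv_mulVec_of_isUnit_det (isUnit_det_augmentedMatrix A hγ) y
  have hyy : y ⬝ᵥ y = y ∘ Sum.inl ⬝ᵥ y ∘ Sum.inl + y ∘ Sum.inr ⬝ᵥ y ∘ Sum.inr := by
    conv_lhs => rw [← Sum.elim_comp_inl_inr y]
    exact sumElim_dotProduct_sumElim _ _ _ _
  obtain ⟨hlo, hhi⟩ := dotProduct_mem_Icc_of_smul_add_transpose_mulVec_eq A hγ hℓ hγℓ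
    (smul_add_transpose_mulVec_eq_of_augmentedMatrix_mulVec_eq A hw)
  rw [← hyy] at hlo hhi
  refine ⟨hlo, hhi.trans ?_⟩
  gcongr
  rw [hyy, le_add_iff_nonneg_left]
  exact dotProduct_self_nonneg _

end AugmentedMatrix

section ComplexVectors

variable {ι : Type} [Fintype ι] (x : EuclideanSpace ℂ ι)

theorem norm_sq_eq_dotProduct_re_add_dotProduct_im :
    ‖x‖ ^ 2 = (fun i => (x i).re) ⬝ᵥ (fun i => (x i).re) +
      (fun i => (x i).im) ⬝ᵥ (fun i => (x i).im) := by
  simp [EuclideanSpace.norm_sq_eq, Complex.sq_norm, Complex.normSq_apply, dotProduct,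
    Finset.sum_add_distrib]

theorem re_inner_mulEC [DecidableEq ι] (W : Matrix ι ι ℝ) :
    (⟪mulEC W x, x⟫).re =
      (fun i => (x i).re) ⬝ᵥ (W *ᵥ fun i => (x i).re) +
        (fun i => (x i).im) ⬝ᵥ (W *ᵥ fun i => (x i).im) := by
  have hcoord : ∀ i, mulEC W x i = ∑ k, (W i k : ℂ) * x k := fun i => rfl
  simp only [PiLp.inner_apply, RCLike.inner_apply, hcoord, Complex.re_sum, dotProduct, mulVec,
    Finset.mul_sum, ← Finset.sum_add_distrib, map_sum]
  refine Finset.sum_congr rfl fun i _ => Finset.sum_congr rfl fun k _ => ?_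
  simp [Complex.mul_re, Complex.mul_im]

end ComplexVectors

theorem one_add_mul_div_mem_Ioo {N D c g L : ℝ} (hN : 0 < N) (hc : c < 0) (hg : 0 < g)
    (hlo : -N / (4 * g) ≤ D) (hhi : D ≤ N / L + N / (4 * g)) :
    (N + c * D) / N ∈ Set.Ioo (1 + c / L + c / (2 * g)) (1 - c / (2 * g)) := by
  have hr_lo : -(1 / (4 * g)) ≤ D / N := by
    rw [le_div_iff₀ hN]; linarith [show -(1 / (4 * g)) * N = -N / (4 * g) by ring]
  have hr_hi : D / N ≤ 1 / L + 1 / (4 * g) := by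
    rw [div_le_iff₀ hN]; linarith [show (1 / L + 1 / (4 * g)) * N = N / L + N / (4 * g) by ring]
  have h42 : c / (2 * g) < c / (4 * g) := by
    rw [div_lt_div_iff₀ (by positivity) (by positivity)]; nlinarith
  have hc_lo := mul_le_mul_of_nonpos_left hr_hi hc.le
  have hc_hi := mul_le_mul_of_nonpos_left hr_lo hc.le
  rw [mul_add, mul_one_div, mul_one_div] at hc_lo
  rw [mul_neg, mul_one_div] at hc_hi
  rw [add_div, div_self hN.ne', mul_div_assoc]
  constructor <;> linarith

theorem re_inner_mulEC_augmentedMatrix_mul_inv_div_mem_Ioo {m n : Type} [Fintype m] [Fintype n]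
    [DecidableEq m] [DecidableEq n] (A : Matrix m n ℝ) {δ γ ℓ : ℝ} (hδγ : δ < γ) (hγ : 0 < γ)
    (hℓ : ∀ z, ℓ * (z ⬝ᵥ z) ≤ A *ᵥ z ⬝ᵥ A *ᵥ z) (hγℓ : 0 < γ + ℓ)
    {x : EuclideanSpace ℂ (m ⊕ n)} (hx : x ≠ 0) :
    (⟪mulEC (augmentedMatrix A δ * (augmentedMatrix A γ)⁻¹) x, x⟫ / ⟪x, x⟫).re ∈
      Set.Ioo (1 + (δ - γ) / (γ + ℓ) + (δ - γ) / (2 * √γ)) (1 - (δ - γ) / (2 * √γ)) := by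
  set a : m ⊕ n → ℝ := fun i => (x i).re
  set b : m ⊕ n → ℝ := fun i => (x i).im
  have hN : ‖x‖ ^ 2 = a ⬝ᵥ a + b ⬝ᵥ b := norm_sq_eq_dotProduct_re_add_dotProduct_im x
  have hxx : ⟪x, x⟫ = ((a ⬝ᵥ a + b ⬝ᵥ b : ℝ) : ℂ) := by
    rw [← hN]; exact_mod_cast inner_self_eq_norm_sq_to_K x
  obtain ⟨ha_lo, ha_hi⟩ := dotProduct_inv_augmentedMatrix_mulVec_mem_Icc A hγ hℓ hγℓ a
  obtain ⟨hb_lo, hb_hi⟩ := dotProduct_inv_augmentedMatrix_mulVec_mem_Icc A hγ hℓ hγℓ b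
  have key := one_add_mul_div_mem_Ioo (L := γ + ℓ)
    (D := a ∘ Sum.inr ⬝ᵥ ((augmentedMatrix A γ)⁻¹ *ᵥ a) ∘ Sum.inr +
      b ∘ Sum.inr ⬝ᵥ ((augmentedMatrix A γ)⁻¹ *ᵥ b) ∘ Sum.inr)
    (hN ▸ pow_pos (norm_pos_iff.mpr hx) 2) (sub_neg.mpr hδγ) (Real.sqrt_pos.mpr hγ)
    (by rw [neg_add, add_div]; linarith) (by rw [add_div, add_div]; linarith)
  rw [hxx, Complex.div_ofReal_re, re_inner_mulEC,
    dotProduct_mulVec_augmentedMatrix_mul_inv A (isUnit_det_augmentedMatrix A hγ),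
    dotProduct_mulVec_augmentedMatrix_mul_inv A (isUnit_det_augmentedMatrix A hγ)]
  convert key using 2
  ring

theorem stmt14_general {m n : ℕ} (A : Matrix (Fin m) (Fin n) ℝ) (μ γ : ℝ)
    (hγ : μ ^ 2 < γ)
    (K T : Matrix (Fin m ⊕ Fin n) (Fin m ⊕ Fin n) ℝ)
    (hK : K = Matrix.fromBlocks 1 A (-Aᵀ) (μ ^ 2 • (1 : Matrix (Fin n) (Fin n) ℝ)))
    (hT : T = Matrix.fromBlocks 1 A (-Aᵀ) (γ • (1 : Matrix (Fin n) (Fin n) ℝ)))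
    (η : ℝ) (hη : η = (γ - μ ^ 2) / (2 * Real.sqrt γ))
    (hAA : (Aᵀ * A).IsHermitian)
    (lmin : ℝ) (hlmin : lmin = ⨅ i, hAA.eigenvalues i)
    (x : EuclideanSpace ℂ (Fin m ⊕ Fin n)) (hx : x ≠ 0) :
    (⟪mulEC (K * T⁻¹) x, x⟫ / ⟪x, x⟫).re ∈
      Set.Ioo ((μ ^ 2 + lmin) / (γ + lmin) - η) (1 + η) := by
  obtain rfl : K = augmentedMatrix A (μ ^ 2) := hK
  obtain rfl : T = augmentedMatrix A γ := hT
  have hγ0 : 0 < γ := (sq_nonneg μ).trans_lt hγ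
  have hℓ : ∀ z, lmin * (z ⬝ᵥ z) ≤ A *ᵥ z ⬝ᵥ A *ᵥ z := fun z => by
    rw [hlmin, ← dotProduct_transpose_mulVec, mulVec_mulVec]
    exact hAA.iInf_eigenvalues_mul_dotProduct_self_le z
  have hℓ0 : 0 ≤ lmin := by
    rw [hlmin]
    exact Real.iInf_nonneg fun i => (posSemidef_conjTranspose_mul_self A).eigenvalues_nonneg i
  have hbounds := re_inner_mulEC_augmentedMatrix_mul_inv_div_mem_Ioo A hγ hγ0 hℓ
    (by linarith) hx
  rwa [hη, show (μ ^ 2 + lmin) / (γ + lmin) - (γ - μ ^ 2) / (2 * √γ) =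
      1 + (μ ^ 2 - γ) / (γ + lmin) + (μ ^ 2 - γ) / (2 * √γ) by field_simp; ring,
    show 1 + (γ - μ ^ 2) / (2 * √γ) = 1 - (μ ^ 2 - γ) / (2 * √γ) by ring]

/-- Real-part bounds on the field of values of `K T⁻¹` with
`K = [I, A; −Aᵀ, μ² I]`, `T = [I, A; −Aᵀ, γ I]`, `γ > μ²`, `η̄ = (γ − μ²)/(2√γ)` and
`λ_min` the smallest eigenvalue of `AᵀA`:
`Re(⟨K T⁻¹ x, x⟩/⟨x, x⟩) ∈ ((μ² + λ_min)/(γ + λ_min) − η̄, 1 + η̄)` for every `x ≠ 0`. -/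
theorem stmt14 {m n : ℕ} (A : Matrix (Fin m) (Fin n) ℝ) (μ γ : ℝ)
    (hμ : 0 ≤ μ) (hγ : μ ^ 2 < γ)
    (K T : Matrix (Fin m ⊕ Fin n) (Fin m ⊕ Fin n) ℝ)
    (hK : K = Matrix.fromBlocks 1 A (-Aᵀ) (μ ^ 2 • (1 : Matrix (Fin n) (Fin n) ℝ)))
    (hT : T = Matrix.fromBlocks 1 A (-Aᵀ) (γ • (1 : Matrix (Fin n) (Fin n) ℝ)))
    (η : ℝ) (hη : η = (γ - μ ^ 2) / (2 * Real.sqrt γ))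
    (hAA : (Aᵀ * A).IsHermitian)
    (lmin : ℝ) (hlmin : lmin = ⨅ i, hAA.eigenvalues i)
    (x : EuclideanSpace ℂ (Fin m ⊕ Fin n)) (hx : x ≠ 0) :
    (⟪mulEC (K * T⁻¹) x, x⟫ / ⟪x, x⟫).re ∈
      Set.Ioo ((μ ^ 2 + lmin) / (γ + lmin) - η) (1 + η) :=
  stmt14_general A μ γ hγ K T hK hT η hη hAA lmin hlmin x hx
end

section
/- Let A be a real m×n matrix, μ ≥ 0, and γ > μ². Set K = [I_m, A; −Aᵀ, μ² I_n], T = [I_m, A; −Aᵀ, γ I_n], and η̄ = (γ − μ²)/(2√γ). Then for every nonzero x ∈ ℂ^{m+n}, the imaginary part of ⟨K T⁻¹ x, x⟩ / ⟨x, x⟩ satisfies |Im( ⟨K T⁻¹ x, x⟩ / ⟨x, x⟩ )| < η̄. -/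
/-!
Write `y = T⁻¹ x = (u, v)`, so that `x = (x₁, x₂) = (u + A v, γ v - Aᵀ u)`. Since `K = T - (γ - μ²) P`
with `P` the projection onto the second block, `⟪K T⁻¹ x, x⟫ = ‖x‖² - (γ - μ²) ⟪v, x₂⟫`, and the
claim reduces to `4 √γ |Im ⟪v, x₂⟫| ≤ ‖x‖²` (which is twice as strong as needed).

For this put `α = ⟪A v, x₁⟫` and `β = ⟪v, x₂⟫`. By adjointness `α + β = c := ‖A v‖² + γ ‖v‖²` is
real, hence `Im (α * conj β) = -c Im β`, and Cauchy–Schwarz gives `c |Im β| ≤ ‖A v‖ ‖v‖ ‖x₁‖ ‖x₂‖`.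
As `c ≥ 2 √γ ‖A v‖ ‖v‖` by AM–GM, `2 √γ |Im β| ≤ ‖x₁‖ ‖x₂‖ ≤ ‖x‖² / 2`.
-/

open Matrix
open scoped ComplexInnerProductSpace

open WithLp

theorem Complex.im_mul_conj_of_add_eq_ofReal {α β : ℂ} {c : ℝ} (h : α + β = c) :
    (α * starRingEnd ℂ β).im = -(c * β.im) := by
  rw [eq_sub_of_add_eq h]
  simp only [Complex.mul_im, Complex.sub_re, Complex.sub_im, Complex.ofReal_re,
    Complex.ofReal_im, Complex.conj_re, Complex.conj_im]
  ring

section InnerProductSpace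

variable {E F : Type*} [NormedAddCommGroup E] [InnerProductSpace ℂ E]
  [NormedAddCommGroup F] [InnerProductSpace ℂ F]

theorem four_mul_sqrt_mul_abs_im_inner_le {γ : ℝ} (hγ : 0 ≤ γ) {w s : E} {v r : F}
    (h : ⟪w, s⟫ + ⟪v, r⟫ = ((‖w‖ ^ 2 + γ * ‖v‖ ^ 2 : ℝ) : ℂ)) :
    4 * √γ * |⟪v, r⟫.im| ≤ ‖s‖ ^ 2 + ‖r‖ ^ 2 := by
  rcases eq_or_ne w 0 with rfl | hw
  · rw [inner_zero_left, zero_add] at h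
    rw [h, Complex.ofReal_im, abs_zero, mul_zero]
    positivity
  rcases eq_or_ne v 0 with rfl | hv
  · rw [inner_zero_left, Complex.zero_im, abs_zero, mul_zero]
    positivity
  have hwv : 0 < ‖w‖ * ‖v‖ := by positivity
  have hc : 2 * √γ * (‖w‖ * ‖v‖) ≤ ‖w‖ ^ 2 + γ * ‖v‖ ^ 2 := by
    nlinarith [sq_nonneg (‖w‖ - √γ * ‖v‖), Real.sq_sqrt hγ]
  have hcs : (‖w‖ ^ 2 + γ * ‖v‖ ^ 2) * |⟪v, r⟫.im| ≤ ‖w‖ * ‖v‖ * (‖s‖ * ‖r‖) := by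
    have hc0 : 0 ≤ ‖w‖ ^ 2 + γ * ‖v‖ ^ 2 := by positivity
    calc (‖w‖ ^ 2 + γ * ‖v‖ ^ 2) * |⟪v, r⟫.im|
        = |(⟪w, s⟫ * starRingEnd ℂ ⟪v, r⟫).im| := by
          rw [Complex.im_mul_conj_of_add_eq_ofReal h, abs_neg, abs_mul, abs_of_nonneg hc0]
      _ ≤ ‖⟪w, s⟫‖ * ‖⟪v, r⟫‖ := by
          rw [← Complex.norm_conj ⟪v, r⟫, ← norm_mul]
          exact Complex.abs_im_le_norm _
      _ ≤ ‖w‖ * ‖s‖ * (‖v‖ * ‖r‖) :=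
          mul_le_mul (norm_inner_le_norm w s) (norm_inner_le_norm v r) (norm_nonneg _)
            (by positivity)
      _ = ‖w‖ * ‖v‖ * (‖s‖ * ‖r‖) := by ring
  have hsr : 2 * √γ * |⟪v, r⟫.im| ≤ ‖s‖ * ‖r‖ := by
    refine le_of_mul_le_mul_left ?_ hwv
    nlinarith [abs_nonneg ⟪v, r⟫.im]
  nlinarith [sq_nonneg (‖s‖ - ‖r‖)]

theorem four_mul_sqrt_mul_abs_im_inner_smul_sub_adjoint_le [FiniteDimensional ℂ E]
    [FiniteDimensional ℂ F] (A : F →ₗ[ℂ] E) {γ : ℝ} (hγ : 0 ≤ γ) (u : E) (v : F) :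
    4 * √γ * |⟪v, (γ : ℂ) • v - A.adjoint u⟫.im| ≤
      ‖u + A v‖ ^ 2 + ‖(γ : ℂ) • v - A.adjoint u‖ ^ 2 := by
  refine four_mul_sqrt_mul_abs_im_inner_le hγ (w := A v) ?_
  rw [inner_add_right, inner_sub_right, inner_smul_right, LinearMap.adjoint_inner_right,
    inner_self_eq_norm_sq_to_K, inner_self_eq_norm_sq_to_K]
  simp only [RCLike.ofReal_eq_complex_ofReal]
  push_cast
  ring

theorem im_inner_sub_ofReal_smul_div_inner_self (x p : E) (δ : ℝ) :
    (⟪x - (δ : ℂ) • p, x⟫ / ⟪x, x⟫).im = -(δ * ⟪p, x⟫.im) / ‖x‖ ^ 2 := by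
  have hxx : ⟪x, x⟫ = ((‖x‖ ^ 2 : ℝ) : ℂ) := by
    rw [inner_self_eq_norm_sq_to_K, RCLike.ofReal_eq_complex_ofReal, Complex.ofReal_pow]
  rw [inner_sub_left, inner_smul_left, Complex.conj_ofReal, hxx, Complex.div_ofReal_im,
    Complex.sub_im, Complex.ofReal_im, Complex.im_ofReal_mul, zero_sub]

end InnerProductSpace

namespace Matrix

theorem isUnit_det_fromBlocks_one_neg_transpose {ι κ : Type*} [Fintype ι] [DecidableEq ι]
    [Fintype κ] [DecidableEq κ] (A : Matrix ι κ ℝ) {γ : ℝ} (hγ : 0 < γ) :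
    IsUnit (fromBlocks 1 A (-Aᵀ) (γ • 1)).det := by
  rw [det_fromBlocks_one₁₁, Matrix.neg_mul, sub_neg_eq_add,
    ← conjTranspose_eq_transpose_of_trivial]
  exact ((PosDef.one.smul hγ).add_posSemidef
    (posSemidef_conjTranspose_mul_self A)).det_pos.ne'.isUnit

section toComplexEuclideanLin

variable {ι κ : Type*} [Fintype κ] [DecidableEq κ]

noncomputable def toComplexEuclideanLin (X : Matrix ι κ ℝ) :
    EuclideanSpace ℂ κ →ₗ[ℂ] EuclideanSpace ℂ ι :=
  toEuclideanLin (X.map Complex.ofReal)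

@[simp]
theorem toComplexEuclideanLin_zero : toComplexEuclideanLin (0 : Matrix ι κ ℝ) = 0 := by
  simp [toComplexEuclideanLin]

@[simp]
theorem toComplexEuclideanLin_one :
    toComplexEuclideanLin (1 : Matrix κ κ ℝ) = LinearMap.id := by
  simp [toComplexEuclideanLin]

@[simp]
theorem toComplexEuclideanLin_neg (X : Matrix ι κ ℝ) :
    toComplexEuclideanLin (-X) = -toComplexEuclideanLin X := by
  simp [toComplexEuclideanLin, Matrix.map_neg]

@[simp]
theorem toComplexEuclideanLin_sub (X Y : Matrix ι κ ℝ) :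
    toComplexEuclideanLin (X - Y) = toComplexEuclideanLin X - toComplexEuclideanLin Y := by
  simp [toComplexEuclideanLin, Matrix.map_sub]

@[simp]
theorem toComplexEuclideanLin_smul (c : ℝ) (X : Matrix ι κ ℝ) :
    toComplexEuclideanLin (c • X) = (c : ℂ) • toComplexEuclideanLin X := by
  have : (c • X).map Complex.ofReal = (c : ℂ) • X.map Complex.ofReal := by
    ext i j
    simp
  rw [toComplexEuclideanLin, toComplexEuclideanLin, this, map_smul]

theorem toComplexEuclideanLin_mul [Fintype ι] [DecidableEq ι] (X : Matrix ι κ ℝ)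
    (Y : Matrix κ ι ℝ) :
    toComplexEuclideanLin (X * Y) = toComplexEuclideanLin X ∘ₗ toComplexEuclideanLin Y := by
  have : (X * Y).map Complex.ofReal = X.map Complex.ofReal * Y.map Complex.ofReal :=
    Matrix.map_mul (f := Complex.ofRealHom)
  rw [toComplexEuclideanLin, toComplexEuclideanLin, toComplexEuclideanLin, this,
    toLpLin_mul_same]

theorem toComplexEuclideanLin_transpose [Fintype ι] [DecidableEq ι] (X : Matrix ι κ ℝ) :
    toComplexEuclideanLin Xᵀ = (toComplexEuclideanLin X).adjoint := by
  rw [toComplexEuclideanLin, toComplexEuclideanLin, ← toEuclideanLin_conjTranspose_eq_adjoint]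
  congr 1
  ext i j
  simp

end toComplexEuclideanLin

end Matrix

theorem mulEC_eq_toComplexEuclideanLin {ι : Type} [Fintype ι] [DecidableEq ι]
    (W : Matrix ι ι ℝ) : mulEC W = W.toComplexEuclideanLin :=
  rfl

namespace EuclideanSpace

def sumElim {𝕜 ι κ : Type*} (u : EuclideanSpace 𝕜 ι) (v : EuclideanSpace 𝕜 κ) :
    EuclideanSpace 𝕜 (ι ⊕ κ) :=
  toLp 2 (Sum.elim (ofLp u) (ofLp v))

theorem exists_eq_sumElim {𝕜 ι κ : Type*} (y : EuclideanSpace 𝕜 (ι ⊕ κ)) :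
    ∃ u v, y = sumElim u v :=
  ⟨toLp 2 (ofLp y ∘ Sum.inl), toLp 2 (ofLp y ∘ Sum.inr), by simp [sumElim]⟩

variable {𝕜 ι κ : Type*} [RCLike 𝕜] [Fintype ι] [Fintype κ]

theorem inner_sumElim (u u' : EuclideanSpace 𝕜 ι) (v v' : EuclideanSpace 𝕜 κ) :
    inner 𝕜 (sumElim u v) (sumElim u' v') = inner 𝕜 u u' + inner 𝕜 v v' := by
  simp [sumElim, PiLp.inner_apply, Fintype.sum_sum_type]

theorem norm_sq_sumElim (u : EuclideanSpace 𝕜 ι) (v : EuclideanSpace 𝕜 κ) :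
    ‖sumElim u v‖ ^ 2 = ‖u‖ ^ 2 + ‖v‖ ^ 2 := by
  simp [norm_sq_eq, sumElim, Fintype.sum_sum_type]

end EuclideanSpace

namespace Matrix

open EuclideanSpace

variable {ι κ : Type*} [Fintype ι] [DecidableEq ι] [Fintype κ] [DecidableEq κ]

theorem toComplexEuclideanLin_fromBlocks (A : Matrix ι ι ℝ) (B : Matrix ι κ ℝ)
    (C : Matrix κ ι ℝ) (D : Matrix κ κ ℝ) (u : EuclideanSpace ℂ ι) (v : EuclideanSpace ℂ κ) :
    (fromBlocks A B C D).toComplexEuclideanLin (sumElim u v) =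
      sumElim (A.toComplexEuclideanLin u + B.toComplexEuclideanLin v)
        (C.toComplexEuclideanLin u + D.toComplexEuclideanLin v) := by
  simp only [toComplexEuclideanLin, sumElim, fromBlocks_map, toLpLin_apply, fromBlocks_mulVec]
  rfl

theorem four_mul_sqrt_mul_abs_im_inner_fromBlocks_le (A : Matrix ι κ ℝ) {γ : ℝ} (hγ : 0 ≤ γ)
    (y : EuclideanSpace ℂ (ι ⊕ κ)) :
    4 * √γ * |⟪(fromBlocks 0 0 0 1 : Matrix (ι ⊕ κ) (ι ⊕ κ) ℝ).toComplexEuclideanLin y,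
        (fromBlocks 1 A (-Aᵀ) (γ • 1)).toComplexEuclideanLin y⟫.im| ≤
      ‖(fromBlocks 1 A (-Aᵀ) (γ • 1)).toComplexEuclideanLin y‖ ^ 2 := by
  obtain ⟨u, v, rfl⟩ := exists_eq_sumElim y
  simp only [toComplexEuclideanLin_fromBlocks, inner_sumElim, norm_sq_sumElim,
    toComplexEuclideanLin_zero, toComplexEuclideanLin_one, toComplexEuclideanLin_neg,
    toComplexEuclideanLin_smul, toComplexEuclideanLin_transpose, LinearMap.zero_apply,
    LinearMap.id_apply, LinearMap.neg_apply, LinearMap.smul_apply, add_zero, zero_add,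
    inner_zero_left, neg_add_eq_sub]
  exact four_mul_sqrt_mul_abs_im_inner_smul_sub_adjoint_le A.toComplexEuclideanLin hγ u v

end Matrix

theorem stmt15_general {m n : ℕ} (A : Matrix (Fin m) (Fin n) ℝ) (μ γ : ℝ)
    (hγ : μ ^ 2 < γ)
    (K T : Matrix (Fin m ⊕ Fin n) (Fin m ⊕ Fin n) ℝ)
    (hK : K = Matrix.fromBlocks 1 A (-Aᵀ) (μ ^ 2 • (1 : Matrix (Fin n) (Fin n) ℝ)))
    (hT : T = Matrix.fromBlocks 1 A (-Aᵀ) (γ • (1 : Matrix (Fin n) (Fin n) ℝ)))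
    (η : ℝ) (hη : η = (γ - μ ^ 2) / (2 * Real.sqrt γ))
    (x : EuclideanSpace ℂ (Fin m ⊕ Fin n)) (hx : x ≠ 0) :
    |(⟪mulEC (K * T⁻¹) x, x⟫ / ⟪x, x⟫).im| < η := by
  have hγ0 : 0 < γ := (sq_nonneg μ).trans_lt hγ
  have hδ : 0 < γ - μ ^ 2 := sub_pos.mpr hγ
  have hKT : K = T - (γ - μ ^ 2) • fromBlocks 0 0 0 1 := by
    rw [hK, hT, fromBlocks_smul, sub_eq_add_neg, fromBlocks_neg, fromBlocks_add]
    simp only [smul_zero, neg_zero, add_zero, ← sub_eq_add_neg, ← sub_smul, sub_sub_cancel]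
  set y := T⁻¹.toComplexEuclideanLin x
  have hTy : T.toComplexEuclideanLin y = x := by
    rw [← LinearMap.comp_apply, ← toComplexEuclideanLin_mul,
      mul_nonsing_inv _ (hT ▸ isUnit_det_fromBlocks_one_neg_transpose A hγ0),
      toComplexEuclideanLin_one, LinearMap.id_apply]
  have hbound := four_mul_sqrt_mul_abs_im_inner_fromBlocks_le A hγ0.le y
  rw [← hT, hTy] at hbound
  have hx2 : 0 < ‖x‖ ^ 2 := by positivity
  rw [mulEC_eq_toComplexEuclideanLin, toComplexEuclideanLin_mul, LinearMap.comp_apply, hKT,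
    toComplexEuclideanLin_sub, toComplexEuclideanLin_smul, LinearMap.sub_apply,
    LinearMap.smul_apply, hTy, im_inner_sub_ofReal_smul_div_inner_self, hη, abs_div, abs_neg,
    abs_mul, abs_of_pos hδ, abs_of_pos hx2, div_lt_div_iff₀ hx2 (by positivity)]
  nlinarith [mul_le_mul_of_nonneg_left hbound hδ.le, mul_pos hδ hx2]

/-- Imaginary-part bound on the field of values of `K T⁻¹` with
`K = [I, A; −Aᵀ, μ² I]`, `T = [I, A; −Aᵀ, γ I]`, `γ > μ²` and `η̄ = (γ − μ²)/(2√γ)`: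
`|Im(⟨K T⁻¹ x, x⟩/⟨x, x⟩)| < η̄` for every `x ≠ 0`. -/
theorem stmt15 {m n : ℕ} (A : Matrix (Fin m) (Fin n) ℝ) (μ γ : ℝ)
    (hμ : 0 ≤ μ) (hγ : μ ^ 2 < γ)
    (K T : Matrix (Fin m ⊕ Fin n) (Fin m ⊕ Fin n) ℝ)
    (hK : K = Matrix.fromBlocks 1 A (-Aᵀ) (μ ^ 2 • (1 : Matrix (Fin n) (Fin n) ℝ)))
    (hT : T = Matrix.fromBlocks 1 A (-Aᵀ) (γ • (1 : Matrix (Fin n) (Fin n) ℝ)))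
    (η : ℝ) (hη : η = (γ - μ ^ 2) / (2 * Real.sqrt γ))
    (x : EuclideanSpace ℂ (Fin m ⊕ Fin n)) (hx : x ≠ 0) :
    |(⟪mulEC (K * T⁻¹) x, x⟫ / ⟪x, x⟫).im| < η :=
  stmt15_general A μ γ hγ K T hK hT η hη x hx
end

section
/- Let μ > 0. Then the equation √γ (γ − μ²) = 2μ² has a unique solution γ* in (0, ∞), and γ* > μ². Moreover, for every γ with μ² < γ < γ* and every real λ ≥ 0, the inequalities 0 < γ − μ² < 2√γ (μ² + λ)/(γ + λ) hold; in particular the interval (μ², γ*) of admissible values of γ is independent of λ. -/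
/-!
The map `f(x) = √x (x - c)` vanishes at `x = c`, is negative below `c` and strictly increasing
above it, so it takes every positive value exactly once, at a point beyond `c`. For `c < x` the
right-hand side `2√x (c + λ)/(x + λ)` is increasing in `λ`, so the bound for all `λ ≥ 0` reduces
to `λ = 0`, i.e. to `√x (x - c) < 2c`, which is `f x < f γ*` for `x < γ*`.
-/

open Real Set

lemma strictMonoOn_sqrt_mul_sub {c : ℝ} (hc : 0 ≤ c) :
    StrictMonoOn (fun x : ℝ => √x * (x - c)) (Ici c) := by
  intro a ha b hb hab
  simp only [mem_Ici] at ha hb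
  calc √a * (a - c) ≤ √b * (a - c) :=
        mul_le_mul_of_nonneg_right (sqrt_le_sqrt hab.le) (by linarith)
    _ < √b * (b - c) := mul_lt_mul_of_pos_left (by linarith) (sqrt_pos.mpr (by linarith))

lemma lt_of_sqrt_mul_sub_pos {c x : ℝ} (h : 0 < √x * (x - c)) : c < x := by
  by_contra! hxc
  exact h.not_ge (mul_nonpos_of_nonneg_of_nonpos (sqrt_nonneg x) (by linarith))

lemma exists_sqrt_mul_sub_eq {c b : ℝ} (hc : 0 ≤ c) (hb : 0 ≤ b) :
    ∃ x, c ≤ x ∧ √x * (x - c) = b := by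
  have hcont : ContinuousOn (fun x : ℝ => √x * (x - c)) (Icc c (c + b + 1)) := by fun_prop
  have hlow : √c * (c - c) ≤ b := by simpa using hb
  -- at `x = c + b + 1` both factors are at least `1` and `b + 1` respectively
  have hhigh : b ≤ √(c + b + 1) * (c + b + 1 - c) := by
    have hone : 1 ≤ √(c + b + 1) := one_le_sqrt.mpr (by linarith)
    nlinarith
  obtain ⟨x, hx, hfx⟩ := intermediate_value_Icc (by linarith) hcont ⟨hlow, hhigh⟩
  exact ⟨x, hx.1, hfx⟩

lemma sub_lt_two_sqrt_mul_add_div_add {c x l : ℝ} (hc : 0 ≤ c) (hcx : c < x)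
    (hfx : √x * (x - c) < 2 * c) (hl : 0 ≤ l) :
    x - c < 2 * √x * (c + l) / (x + l) := by
  have hs : 0 < √x := sqrt_pos.mpr (by linarith)
  have hsq : √x * √x = x := mul_self_sqrt (by linarith)
  have hx_zero : (x - c) * x < 2 * √x * c := by nlinarith
  have hsub : x - c < 2 * √x := by
    refine lt_of_mul_lt_mul_left ?_ hs.le
    nlinarith
  rw [lt_div_iff₀ (by linarith)]
  calc (x - c) * (x + l) = (x - c) * x + (x - c) * l := by ring
    _ < 2 * √x * c + 2 * √x * l := add_lt_add_of_lt_of_le hx_zero (by nlinarith)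
    _ = 2 * √x * (c + l) := by ring

/-- For `μ > 0`, the equation `√γ (γ − μ²) = 2μ²` has a unique positive solution `γ*`,
which satisfies `γ* > μ²`; and for every `γ ∈ (μ², γ*)` and every `λ ≥ 0` one has
`0 < γ − μ² < 2√γ (μ² + λ)/(γ + λ)`. -/
theorem stmt17 (μ : ℝ) (hμ : 0 < μ) :
    ∃ γs : ℝ, 0 < γs ∧ Real.sqrt γs * (γs - μ ^ 2) = 2 * μ ^ 2 ∧
      (∀ γ' : ℝ, 0 < γ' → Real.sqrt γ' * (γ' - μ ^ 2) = 2 * μ ^ 2 → γ' = γs) ∧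
      μ ^ 2 < γs ∧
      ∀ γ : ℝ, μ ^ 2 < γ → γ < γs → ∀ l : ℝ, 0 ≤ l →
        0 < γ - μ ^ 2 ∧ γ - μ ^ 2 < 2 * Real.sqrt γ * (μ ^ 2 + l) / (γ + l) := by
  have hc : 0 ≤ μ ^ 2 := sq_nonneg μ
  have hb : 0 < 2 * μ ^ 2 := by positivity
  have hmono := strictMonoOn_sqrt_mul_sub hc
  obtain ⟨γs, -, hγs⟩ := exists_sqrt_mul_sub_eq hc hb.le
  have hγs_gt : μ ^ 2 < γs := lt_of_sqrt_mul_sub_pos (hγs ▸ hb)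
  refine ⟨γs, by linarith, hγs, fun γ' _ hγ' => ?_, hγs_gt, fun γ hγ hγγs l hl => ?_⟩
  · have hγ'_gt : μ ^ 2 < γ' := lt_of_sqrt_mul_sub_pos (hγ' ▸ hb)
    exact hmono.injOn (le_of_lt hγ'_gt) (le_of_lt hγs_gt) (hγ'.trans hγs.symm)
  · have hfγ : √γ * (γ - μ ^ 2) < 2 * μ ^ 2 := hγs ▸ hmono hγ.le hγs_gt.le hγγs
    exact ⟨by linarith, sub_lt_two_sqrt_mul_add_div_add hc hγ hfγ hl⟩
end
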